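/- (Convergence of the unfolded domains, Prop. 4.4.) Assume the sequence ε_n → 0⁺ together with its partitions is compatible with the oscillations. Then for every 1 ≤ p < ∞, the functions T_{ε_n}(χ^{ε_n}) converge to χ strongly in L^p((0,1) × Y*), i.e. ∫_{(0,1)×Y*} |T_{ε_n}(χ^{ε_n}) − χ|^p → 0 as n → ∞. -/

import Mathlib

/-!
At almost every point `(x, y₁, y₂)` of `(0,1) × Y*` the integrand is eventually `0`. Indeed,
`T_ε(χ^ε)(x, y₁, y₂) = 1` iff `y₁ < l([x]_ε)` and `y₂ < G(ξ, ξ/ε)` at the unfolded point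
`ξ = [x]_ε + Γ_{[x]_ε} y₁`, and compatibility with the oscillations makes these thresholds converge
to `l(x)` and `G(x, y₁)`, the thresholds defining `W`. So the two conditions eventually agree,
except on the graphs `y₁ = l(x)` and `y₂ = G(x, y₁)`, which are null. The integrand is bounded by
`1` on the bounded set `(0,1) × Y*`, and dominated convergence concludes.
-/

open MeasureTheory Set Filter Topology

noncomputable section

/-- The thin domain `R^ε = {(x,y) : x ∈ (0,1), 0 < y < ε G(x, x/ε)}`. -/
def thinDomain (G : ℝ → ℝ → ℝ) (ε : ℝ) : Set (ℝ × ℝ) :=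
  {z : ℝ × ℝ | z.1 ∈ Ioo (0 : ℝ) 1 ∧ z.2 ∈ Ioo (0 : ℝ) (ε * G z.1 (z.1 / ε))}

/-- The reference cell `Y* = (0,l₁) × (0,G₁)`. -/
def Ystar (l1 G1 : ℝ) : Set (ℝ × ℝ) := Ioo (0 : ℝ) l1 ×ˢ Ioo (0 : ℝ) G1

/-- A partition `0 = x₀ < x₁ < ⋯ < x_{N+1} = 1` of the interval `(0,1)` (for a parameter `ε`). -/
structure OscPartition where
  N : ℕ
  pts : ℕ → ℝ
  pts_zero : pts 0 = 0
  pts_last : pts (N + 1) = 1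
  pts_lt : ∀ k ≤ N, pts k < pts (k + 1)

/-- The index `k` such that `x ∈ [x_k, x_{k+1})` (for `x ∈ [0,1)`). -/
def OscPartition.idx (P : OscPartition) (x : ℝ) : ℕ :=
  Nat.findGreatest (fun k => P.pts k ≤ x) P.N

/-- `[x]_ε`, the partition point just below `x`. -/
def OscPartition.bracket (P : OscPartition) (x : ℝ) : ℝ := P.pts (P.idx x)

/-- `Γ_{[x]_ε} = (x_{k+1} - x_k) / l(x_k)` for `x ∈ [x_k, x_{k+1})`. -/
def OscPartition.Gamma (P : OscPartition) (l : ℝ → ℝ) (x : ℝ) : ℝ :=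
  (P.pts (P.idx x + 1) - P.pts (P.idx x)) / l (P.pts (P.idx x))

/-- The unfolding operator `T_ε` associated to a partition, acting on a function `φ` on `R^ε`
(extended by zero to all of `ℝ²` via the indicator of `R^ε`). -/
def unfoldOp (G : ℝ → ℝ → ℝ) (l : ℝ → ℝ) (ε : ℝ) (P : OscPartition)
    (φ : ℝ × ℝ → ℝ) : ℝ × ℝ × ℝ → ℝ := fun q =>
  if q.2.1 < l (P.bracket q.1) then
    (thinDomain G ε).indicator φ (P.bracket q.1 + P.Gamma l q.1 * q.2.1, ε * q.2.2)
  else 0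

/-- The averaging operator `U_ε`, the formal adjoint of `T_ε`. -/
def avgOp (l : ℝ → ℝ) (ε : ℝ) (P : OscPartition) (ψ : ℝ × ℝ × ℝ → ℝ) : ℝ × ℝ → ℝ := fun z =>
  (1 / l (P.bracket z.1)) *
    ∫ y₁ in Ioo (0 : ℝ) (l (P.bracket z.1)),
      ψ (P.bracket z.1 + P.Gamma l z.1 * y₁, (z.1 - P.bracket z.1) / P.Gamma l z.1, z.2 / ε)

/-- The limit set `W = {(x,y₁,y₂) : x ∈ (0,1), 0 < y₁ < l(x), 0 < y₂ < G(x,y₁)}`. -/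
def Wset (G : ℝ → ℝ → ℝ) (l : ℝ → ℝ) : Set (ℝ × ℝ × ℝ) :=
  {q | q.1 ∈ Ioo (0 : ℝ) 1 ∧ q.2.1 ∈ Ioo (0 : ℝ) (l q.1) ∧ q.2.2 ∈ Ioo (0 : ℝ) (G q.1 q.2.1)}

/-- The set `W₀ = {(x,y₁) : x ∈ (0,1), 0 < y₁ < l(x)}`. -/
def W0set (l : ℝ → ℝ) : Set (ℝ × ℝ) :=
  {z : ℝ × ℝ | z.1 ∈ Ioo (0 : ℝ) 1 ∧ z.2 ∈ Ioo (0 : ℝ) (l z.1)}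

theorem IsOpen.setOf_mem_Ioo {X α : Type*} [TopologicalSpace X] [TopologicalSpace α]
    [LinearOrder α] [OrderClosedTopology α] {U : Set X} (hU : IsOpen U) {f g h : X → α}
    (hf : ContinuousOn f U) (hg : ContinuousOn g U) (hh : ContinuousOn h U) :
    IsOpen {x | x ∈ U ∧ h x ∈ Ioo (f x) (g x)} := by
  have hIoo : IsOpen {p : α × α × α | p.1 ∈ Ioo p.2.1 p.2.2} :=
    (isOpen_lt (continuous_fst.comp continuous_snd) continuous_fst).inter
      (isOpen_lt continuous_fst (continuous_snd.comp continuous_snd))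
  exact (hh.prodMk (hf.prodMk hg)).isOpen_inter_preimage hU hIoo

theorem MeasureTheory.Measure.ae_prod_snd_ne {α β : Type*} [MeasurableSpace α] [MeasurableSpace β]
    [MeasurableEq β] (μ : Measure α) (ν : Measure β) [SFinite ν] [NullSingletonClass ν]
    {f : α → β} (hf : Measurable f) : ∀ᵐ p ∂μ.prod ν, p.2 ≠ f p.1 :=
  (Measure.ae_prod_iff_ae_ae (measurableSet_eq_fun measurable_snd (hf.comp measurable_fst)).compl).2
    (ae_of_all _ fun x => ν.ae_ne (f x))

theorem ContinuousOn.ae_prod_snd_ne {X : Type*} [TopologicalSpace X] [MeasurableSpace X]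
    [OpensMeasurableSpace X] (μ : Measure X) {U : Set X} (hU : MeasurableSet U) {f : X → ℝ}
    (hf : ContinuousOn f U) : ∀ᵐ p ∂μ.prod volume, p.1 ∈ U → p.2 ≠ f p.1 := by
  classical
  have hmeas : Measurable (U.piecewise f 0) :=
    hf.measurable_piecewise continuousOn_const hU
  filter_upwards [μ.ae_prod_snd_ne volume hmeas] with p hp hpU
  rwa [piecewise_eq_of_mem _ _ _ hpU] at hp

theorem Filter.Tendsto.eventually_const_lt_iff {ι α : Type*} [TopologicalSpace α] [LinearOrder α]
    [OrderClosedTopology α] {F : Filter ι} {u : ι → α} {a y : α} (hu : Tendsto u F (𝓝 a))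
    (hy : y ≠ a) : ∀ᶠ n in F, (y < u n ↔ y < a) := by
  rcases hy.lt_or_gt with hya | hay
  · exact (hu.eventually_const_lt hya).mono fun n hn => iff_of_true hn hya
  · exact (hu.eventually_lt_const hay).mono fun n hn =>
      iff_of_false (not_lt.2 hn.le) (not_lt.2 hay.le)

theorem tendsto_integral_abs_indicator_sub_rpow {α : Type*} [MeasurableSpace α] {μ : Measure α}
    [IsFiniteMeasure μ] {A : ℕ → Set α} {B : Set α} (hA : ∀ n, MeasurableSet (A n))
    (hB : MeasurableSet B) (hAB : ∀ᵐ x ∂μ, ∀ᶠ n in atTop, (x ∈ A n ↔ x ∈ B)) {p : ℝ}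
    (hp : 0 < p) :
    Tendsto (fun n => ∫ x, |(A n).indicator (fun _ => (1 : ℝ)) x
      - B.indicator (fun _ => (1 : ℝ)) x| ^ p ∂μ) atTop (𝓝 0) := by
  have hmeas : ∀ n, AEStronglyMeasurable (fun x => |(A n).indicator (fun _ => (1 : ℝ)) x
      - B.indicator (fun _ => (1 : ℝ)) x| ^ p) μ := fun n =>
    (((measurable_const.indicator (hA n)).sub (measurable_const.indicator hB)).abs.pow_const
      p).aestronglyMeasurable
  have hbound : ∀ n, ∀ᵐ x ∂μ, ‖|(A n).indicator (fun _ => (1 : ℝ)) x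
      - B.indicator (fun _ => (1 : ℝ)) x| ^ p‖ ≤ 1 := by
    refine fun n => ae_of_all _ fun x => ?_
    have hdiff : |(A n).indicator (fun _ => (1 : ℝ)) x - B.indicator (fun _ => (1 : ℝ)) x| ≤ 1 := by
      by_cases hxA : x ∈ A n <;> by_cases hxB : x ∈ B <;> simp [hxA, hxB]
    rw [Real.norm_of_nonneg (by positivity)]
    exact Real.rpow_le_one (abs_nonneg _) hdiff hp.le
  have hlim : ∀ᵐ x ∂μ, Tendsto (fun n => |(A n).indicator (fun _ => (1 : ℝ)) x
      - B.indicator (fun _ => (1 : ℝ)) x| ^ p) atTop (𝓝 0) := by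
    filter_upwards [hAB] with x hx
    refine (tendsto_congr' ?_).2 tendsto_const_nhds
    filter_upwards [hx] with n hn
    rw [indicator_eq_indicator hn rfl, sub_self, abs_zero, Real.zero_rpow hp.ne']
  simpa using tendsto_integral_of_dominated_convergence _ hmeas (integrable_const 1) hbound hlim

namespace OscPartition

theorem idx_monotone (P : OscPartition) : Monotone P.idx := fun _ _ hab =>
  Nat.findGreatest_mono (fun _ hn => hn.trans hab) le_rfl

theorem measurable_comp_idx {β : Type*} [MeasurableSpace β] (P : OscPartition) (f : ℕ → β) :
    Measurable fun x => f (P.idx x) :=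
  measurable_from_top.comp P.idx_monotone.measurable

end OscPartition

section Domains

variable {G : ℝ → ℝ → ℝ} {l : ℝ → ℝ}

theorem isOpen_thinDomain
    (hG : ContinuousOn (fun z : ℝ × ℝ => G z.1 z.2) (Ioo 0 1 ×ˢ (univ : Set ℝ))) (ε : ℝ) :
    IsOpen (thinDomain G ε) := by
  have hGε : ContinuousOn (fun z : ℝ × ℝ => ε * G z.1 (z.1 / ε)) (Prod.fst ⁻¹' Ioo 0 1) :=
    continuousOn_const.mul <|
      hG.comp (continuous_fst.prodMk (continuous_fst.div_const ε)).continuousOn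
        fun _ hz => ⟨hz, trivial⟩
  exact (isOpen_Ioo.preimage continuous_fst).setOf_mem_Ioo continuousOn_const hGε
    continuous_snd.continuousOn

theorem isOpen_W0set (hl : ContinuousOn l (Ioo 0 1)) : IsOpen (W0set l) :=
  (isOpen_Ioo.preimage continuous_fst).setOf_mem_Ioo continuousOn_const
    (hl.comp continuous_fst.continuousOn fun _ hz => hz) continuous_snd.continuousOn

theorem isOpen_Wset (hl : ContinuousOn l (Ioo 0 1))
    (hG : ContinuousOn (fun z : ℝ × ℝ => G z.1 z.2) (Ioo 0 1 ×ˢ (univ : Set ℝ))) :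
    IsOpen (Wset G l) := by
  have hW0 : IsOpen {q : ℝ × ℝ × ℝ | (q.1, q.2.1) ∈ W0set l} :=
    (isOpen_W0set hl).preimage (by fun_prop)
  have hGq : ContinuousOn (fun q : ℝ × ℝ × ℝ => G q.1 q.2.1) {q | (q.1, q.2.1) ∈ W0set l} :=
    hG.comp (continuous_fst.prodMk (continuous_fst.comp continuous_snd)).continuousOn
      fun _ hq => ⟨hq.1, trivial⟩
  have hW : Wset G l = {q | (q.1, q.2.1) ∈ W0set l ∧ q.2.2 ∈ Ioo 0 (G q.1 q.2.1)} := by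
    ext; exact and_assoc.symm
  rw [hW]
  exact hW0.setOf_mem_Ioo (f := fun _ => 0) (h := fun q => q.2.2) continuousOn_const hGq
    (continuous_snd.comp continuous_snd).continuousOn

theorem mk_mul_mem_thinDomain_iff {ε ξ y : ℝ} (hε : 0 < ε) (hy : 0 < y) :
    (ξ, ε * y) ∈ thinDomain G ε ↔ ξ ∈ Ioo 0 1 ∧ y < G ξ (1 / ε * ξ) := by
  simp only [thinDomain, mem_ofPred_eq, mem_Ioo, one_div_mul_eq_div, mul_lt_mul_iff_right₀ hε,
    mul_pos hε hy, true_and]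

end Domains

def unfoldedDomain (G : ℝ → ℝ → ℝ) (l : ℝ → ℝ) (ε : ℝ) (P : OscPartition) : Set (ℝ × ℝ × ℝ) :=
  {q | q.2.1 < l (P.bracket q.1) ∧
    (P.bracket q.1 + P.Gamma l q.1 * q.2.1, ε * q.2.2) ∈ thinDomain G ε}

theorem unfoldOp_indicator_thinDomain (G : ℝ → ℝ → ℝ) (l : ℝ → ℝ) (ε : ℝ) (P : OscPartition) :
    unfoldOp G l ε P ((thinDomain G ε).indicator fun _ => 1) =
      (unfoldedDomain G l ε P).indicator fun _ => 1 := by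
  ext q
  simp only [unfoldOp, indicator_indicator, inter_self]
  split_ifs with h
  · exact indicator_eq_indicator (and_iff_right h).symm rfl
  · exact (indicator_of_notMem (fun hq => h hq.1) _).symm

theorem measurableSet_unfoldedDomain {G : ℝ → ℝ → ℝ}
    (hG : ContinuousOn (fun z : ℝ × ℝ => G z.1 z.2) (Ioo 0 1 ×ˢ (univ : Set ℝ))) (l : ℝ → ℝ)
    (ε : ℝ) (P : OscPartition) : MeasurableSet (unfoldedDomain G l ε P) := by
  have hbracket : Measurable P.bracket := P.measurable_comp_idx P.pts
  have hGamma : Measurable (P.Gamma l) :=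
    P.measurable_comp_idx fun k => (P.pts (k + 1) - P.pts k) / l (P.pts k)
  have hl : Measurable fun x => l (P.bracket x) := P.measurable_comp_idx (l ∘ P.pts)
  have hmap : Measurable fun q : ℝ × ℝ × ℝ =>
      (P.bracket q.1 + P.Gamma l q.1 * q.2.1, ε * q.2.2) := by fun_prop
  exact (measurableSet_lt (by fun_prop) (hl.comp measurable_fst)).inter
    (hmap (isOpen_thinDomain hG ε).measurableSet)

theorem mem_unfoldedDomain_iff {G : ℝ → ℝ → ℝ} {l : ℝ → ℝ} {ε : ℝ} {P : OscPartition}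
    {x y₁ y₂ : ℝ} (hε : 0 < ε) (hy₂ : 0 < y₂) :
    (x, y₁, y₂) ∈ unfoldedDomain G l ε P ↔ y₁ < l (P.bracket x) ∧
      P.bracket x + P.Gamma l x * y₁ ∈ Ioo 0 1 ∧
      y₂ < G (P.bracket x + P.Gamma l x * y₁) (1 / ε * (P.bracket x + P.Gamma l x * y₁)) :=
  and_congr_right' (mk_mul_mem_thinDomain_iff hε hy₂)

section Convergence

variable {G : ℝ → ℝ → ℝ} {l : ℝ → ℝ} {ε : ℕ → ℝ} {P : ℕ → OscPartition}

theorem eventually_mem_unfoldedDomain_iff_mem_Wset (hε : ∀ n, 0 < ε n) {x y₁ y₂ : ℝ}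
    (hx : x ∈ Ioo 0 1) (hy₁ : 0 < y₁) (hy₂ : 0 < y₂) (hy₁l : y₁ ≠ l x) (hy₂G : y₂ ≠ G x y₁)
    (hl : Tendsto (fun n => l ((P n).bracket x)) atTop (𝓝 (l x)))
    (hunfold : (x, y₁) ∈ W0set l →
      Tendsto (fun n => (P n).bracket x + (P n).Gamma l x * y₁) atTop (𝓝 x) ∧
      Tendsto (fun n => G ((P n).bracket x + (P n).Gamma l x * y₁)
          ((1 / ε n) * ((P n).bracket x + (P n).Gamma l x * y₁))) atTop (𝓝 (G x y₁))) :
    ∀ᶠ n in atTop, ((x, y₁, y₂) ∈ unfoldedDomain G l (ε n) (P n) ↔ (x, y₁, y₂) ∈ Wset G l) := by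
  by_cases hy₁x : y₁ < l x
  · obtain ⟨hξ, hGn⟩ := hunfold ⟨hx, hy₁, hy₁x⟩
    filter_upwards [hl.eventually_const_lt_iff hy₁l, hξ.eventually_mem (isOpen_Ioo.mem_nhds hx),
      hGn.eventually_const_lt_iff hy₂G] with n hln hξn hGn
    rw [mem_unfoldedDomain_iff (hε n) hy₂, hGn, and_iff_right (hln.2 hy₁x), and_iff_right hξn]
    exact ⟨fun h => ⟨hx, ⟨hy₁, hy₁x⟩, hy₂, h⟩, fun h => h.2.2.2⟩
  · filter_upwards [hl.eventually_const_lt_iff hy₁l] with n hln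
    rw [mem_unfoldedDomain_iff (hε n) hy₂]
    exact iff_of_false (fun h => hy₁x (hln.1 h.1)) fun h => hy₁x h.2.1.2

theorem ae_eventually_mem_unfoldedDomain_iff_mem_Wset (hε : ∀ n, 0 < ε n)
    (hl : ContinuousOn l (Ioo 0 1))
    (hG : ContinuousOn (fun z : ℝ × ℝ => G z.1 z.2) (Ioo 0 1 ×ˢ (univ : Set ℝ)))
    (hlP : ∀ᵐ x ∂volume.restrict (Ioo (0 : ℝ) 1),
      Tendsto (fun n => l ((P n).bracket x)) atTop (𝓝 (l x)))
    (hGP : ∀ᵐ z ∂volume.restrict (W0set l),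
      Tendsto (fun n => (P n).bracket z.1 + (P n).Gamma l z.1 * z.2) atTop (𝓝 z.1) ∧
      Tendsto (fun n => G ((P n).bracket z.1 + (P n).Gamma l z.1 * z.2)
          ((1 / ε n) * ((P n).bracket z.1 + (P n).Gamma l z.1 * z.2))) atTop
        (𝓝 (G z.1 z.2))) :
    ∀ᵐ q : ℝ × ℝ × ℝ, q.1 ∈ Ioo 0 1 → 0 < q.2.1 → 0 < q.2.2 →
      ∀ᶠ n in atTop, (q ∈ unfoldedDomain G l (ε n) (P n) ↔ q ∈ Wset G l) := by
  have hfst : Measure.QuasiMeasurePreserving (Prod.map id Prod.fst) (volume : Measure (ℝ × ℝ × ℝ))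
      volume :=
    QuasiMeasurePreserving.prodMap (.id (volume : Measure ℝ))
      (Measure.quasiMeasurePreserving_fst (μ := volume) (ν := (volume : Measure ℝ)))
  have hassoc := (measurePreserving_prodAssoc (volume : Measure ℝ) (volume : Measure ℝ)
    (volume : Measure ℝ)).symm
  filter_upwards [Measure.quasiMeasurePreserving_fst.ae (ae_imp_of_ae_restrict hlP),
    hfst.ae (ae_imp_of_ae_restrict hGP), hfst.ae (hl.ae_prod_snd_ne volume measurableSet_Ioo),
    hassoc.quasiMeasurePreserving.ae
      (hG.ae_prod_snd_ne volume (measurableSet_Ioo.prod MeasurableSet.univ))]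
    with ⟨x, y₁, y₂⟩ hlx hunfold hy₁l hy₂G hx hy₁ hy₂
  exact eventually_mem_unfoldedDomain_iff_mem_Wset hε hx hy₁ hy₂ (hy₁l hx) (hy₂G ⟨hx, trivial⟩)
    (hlx hx) hunfold

end Convergence

theorem unfolded_domains_converge_general
    (l1 G1 : ℝ)
    (l : ℝ → ℝ) (hlC1 : ContDiffOn ℝ 1 l (Ioo 0 1))
    (G : ℝ → ℝ → ℝ)
    (hGcont : ContinuousOn (fun z : ℝ × ℝ => G z.1 z.2) (Ioo 0 1 ×ˢ (univ : Set ℝ)))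
    (ε : ℕ → ℝ) (hεpos : ∀ n, 0 < ε n)
    (P : ℕ → OscPartition)
    (hcompat₁ : ∀ᵐ x ∂volume.restrict (Ioo (0 : ℝ) 1),
      Tendsto (fun n => (P n).bracket x) atTop (𝓝 x) ∧
      Tendsto (fun n => l ((P n).bracket x)) atTop (𝓝 (l x)))
    (hcompat₂ : ∀ᵐ z ∂volume.restrict (W0set l),
      Tendsto (fun n => (P n).bracket z.1 + (P n).Gamma l z.1 * z.2) atTop (𝓝 z.1) ∧
      Tendsto (fun n => G ((P n).bracket z.1 + (P n).Gamma l z.1 * z.2)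
          ((1 / ε n) * ((P n).bracket z.1 + (P n).Gamma l z.1 * z.2))) atTop
        (𝓝 (G z.1 z.2)))
    (pr : ℝ) (hpr : 1 ≤ pr) :
    Tendsto
      (fun n => ∫ q in Ioo (0 : ℝ) 1 ×ˢ Ystar l1 G1,
        |unfoldOp G l (ε n) (P n)
            ((thinDomain G (ε n)).indicator (fun _ => (1 : ℝ))) q
          - (Wset G l).indicator (fun _ => (1 : ℝ)) q| ^ pr)
      atTop (𝓝 0) := by
  have hl : ContinuousOn l (Ioo 0 1) := hlC1.continuousOn
  have hS : MeasurableSet (Ioo (0 : ℝ) 1 ×ˢ Ystar l1 G1) :=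
    measurableSet_Ioo.prod (measurableSet_Ioo.prod measurableSet_Ioo)
  have : IsFiniteMeasure (volume.restrict (Ioo (0 : ℝ) 1 ×ˢ Ystar l1 G1)) :=
    isFiniteMeasure_restrict.2
      (Bornology.IsBounded.prod (Metric.isBounded_Ioo 0 1)
        ((Metric.isBounded_Ioo 0 l1).prod (Metric.isBounded_Ioo 0 G1))).measure_lt_top.ne
  simp_rw [unfoldOp_indicator_thinDomain]
  refine tendsto_integral_abs_indicator_sub_rpow
    (fun n => measurableSet_unfoldedDomain hGcont l _ _) (isOpen_Wset hl hGcont).measurableSet ?_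
    (by linarith)
  filter_upwards [ae_restrict_mem hS, ae_restrict_of_ae <|
    ae_eventually_mem_unfoldedDomain_iff_mem_Wset hεpos hl hGcont (hcompat₁.mono fun _ h => h.2)
      hcompat₂] with q hq hlim
  exact hlim hq.1 hq.2.1.1 hq.2.2.1

/-- Convergence of the unfolded domains (Prop. 4.4). -/
theorem unfolded_domains_converge
    (l0 l1 G0 G1 : ℝ) (hl0 : 0 < l0) (hl01 : l0 < l1) (hG0 : 0 < G0) (hG01 : G0 ≤ G1)
    (l : ℝ → ℝ) (hlC1 : ContDiffOn ℝ 1 l (Ioo 0 1))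
    (hlb : ∀ x ∈ Icc (0 : ℝ) 1, l0 ≤ l x ∧ l x < l1)
    (G : ℝ → ℝ → ℝ)
    (hGcont : ContinuousOn (fun z : ℝ × ℝ => G z.1 z.2) (Ioo 0 1 ×ˢ (univ : Set ℝ)))
    (hGb : ∀ x ∈ Ioo (0 : ℝ) 1, ∀ y : ℝ, G0 ≤ G x y ∧ G x y ≤ G1)
    (hGper : ∀ x ∈ Ioo (0 : ℝ) 1, ∀ y : ℝ, G x (y + l x) = G x y)
    (ε : ℕ → ℝ) (hεpos : ∀ n, 0 < ε n) (hε : Tendsto ε atTop (𝓝 0))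
    (P : ℕ → OscPartition)
    (hcompat₁ : ∀ᵐ x ∂volume.restrict (Ioo (0 : ℝ) 1),
      Tendsto (fun n => (P n).bracket x) atTop (𝓝 x) ∧
      Tendsto (fun n => l ((P n).bracket x)) atTop (𝓝 (l x)))
    (hcompat₂ : ∀ᵐ z ∂volume.restrict (W0set l),
      Tendsto (fun n => (P n).bracket z.1 + (P n).Gamma l z.1 * z.2) atTop (𝓝 z.1) ∧
      Tendsto (fun n => G ((P n).bracket z.1 + (P n).Gamma l z.1 * z.2)
          ((1 / ε n) * ((P n).bracket z.1 + (P n).Gamma l z.1 * z.2))) atTop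
        (𝓝 (G z.1 z.2)))
    (pr : ℝ) (hpr : 1 ≤ pr) :
    Tendsto
      (fun n => ∫ q in Ioo (0 : ℝ) 1 ×ˢ Ystar l1 G1,
        |unfoldOp G l (ε n) (P n)
            ((thinDomain G (ε n)).indicator (fun _ => (1 : ℝ))) q
          - (Wset G l).indicator (fun _ => (1 : ℝ)) q| ^ pr)
      atTop (𝓝 0) :=
  unfolded_domains_converge_general l1 G1 l hlC1 G hGcont ε hεpos P hcompat₁ hcompat₂ pr hpr

end
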